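/- arXiv:2109.04391 — 3 statements merged into one kernel-verified Lean document; each statement's English description precedes it below -/
import Mathlib

section
/- For all integers i ≥ j ≥ 1, the Narayana number N(i,j) = (1/i) * C(i,j) * C(i,j-1) is a positive integer. -/
/-- For all integers i ≥ j ≥ 1, the Narayana number N(i,j) = (1/i)·C(i,j)·C(i,j-1)
is a positive integer: i divides C(i,j)·C(i,j-1), and the quotient is positive. -/
theorem narayana_pos_integer (i j : ℕ) (hj : 1 ≤ j) (hij : j ≤ i) :
    i ∣ Nat.choose i j * Nat.choose i (j - 1) ∧
      0 < Nat.choose i j * Nat.choose i (j - 1) / i := by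
  obtain ⟨m, rfl⟩ : ∃ m, i = m + 1 := ⟨i - 1, by omega⟩
  obtain ⟨n, rfl⟩ : ∃ n, j = n + 1 := ⟨j - 1, by omega⟩
  set i := m + 1
  set X := Nat.choose i (n + 1) * Nat.choose i n with hX
  have hA : i * Nat.choose m n = Nat.choose i (n + 1) * (n + 1) :=
    Nat.add_one_mul_choose_eq m n
  have hB : Nat.choose m n * i = Nat.choose i n * (i - n) :=
    Nat.choose_mul_succ_eq m n
  have h1 : i ∣ (n + 1) * X := by
    refine ⟨Nat.choose m n * Nat.choose i n, ?_⟩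
    calc (n + 1) * X = (Nat.choose i (n + 1) * (n + 1)) * Nat.choose i n := by ring
      _ = (i * Nat.choose m n) * Nat.choose i n := by rw [hA]
      _ = i * (Nat.choose m n * Nat.choose i n) := by ring
  have h2 : i ∣ (i - n) * X := by
    refine ⟨Nat.choose i (n + 1) * Nat.choose m n, ?_⟩
    calc (i - n) * X = Nat.choose i (n + 1) * (Nat.choose i n * (i - n)) := by ring
      _ = Nat.choose i (n + 1) * (Nat.choose m n * i) := by rw [hB]
      _ = i * (Nat.choose i (n + 1) * Nat.choose m n) := by ring
  have hsum : (n + 1) * X + (i - n) * X = (i + 1) * X := by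
    have : n + 1 + (i - n) = i + 1 := by omega
    rw [← add_mul, this]
  have h3 : i ∣ (i + 1) * X := hsum ▸ Nat.dvd_add h1 h2
  have hcop : Nat.Coprime i (i + 1) := by simp [Nat.Coprime, Nat.succ_eq_add_one, Nat.gcd_comm]
  have hdvd : i ∣ X := hcop.dvd_of_dvd_mul_left h3
  have hXpos : 0 < X := Nat.mul_pos (Nat.choose_pos (by omega)) (Nat.choose_pos (by omega))
  have : Nat.choose i (n + 1) * Nat.choose i (n + 1 - 1) = X := by simp [hX]
  rw [this]
  exact ⟨hdvd, Nat.div_pos (Nat.le_of_dvd hXpos hdvd) (by omega)⟩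
end

section
/- Let A be an associative algebra and L : A → A a linear map satisfying the Nijenhuis identity L(x)L(y) = L(L(x)y) + L(xL(y)) - L²(xy) for all x, y ∈ A. Then the operation x * y := L(x)y + xL(y) - L(xy) is associative on A. -/
/-- If L satisfies the Nijenhuis identity, then
x * y := L(x)y + xL(y) - L(xy) is an associative operation. -/
theorem nijenhuis_assoc {F : Type*} [Field F]
    {A : Type*} [NonUnitalRing A] [Module F A]
    (L : A →ₗ[F] A)
    (h : ∀ x y : A, L x * L y = L (L x * y) + L (x * L y) - L (L (x * y))) :
    ∀ x y z : A,
      L (L x * y + x * L y - L (x * y)) * z +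
          (L x * y + x * L y - L (x * y)) * L z -
          L ((L x * y + x * L y - L (x * y)) * z) =
        L x * (L y * z + y * L z - L (y * z)) +
          x * L (L y * z + y * L z - L (y * z)) -
          L (x * (L y * z + y * L z - L (y * z))) := by
  intro x y z
  simp only [map_add, map_sub, add_mul, sub_mul, mul_add, mul_sub, mul_assoc, h]
  rw [← mul_assoc (L x) (L y) z, h]
  simp only [add_mul, sub_mul]
  abel
end

section
/- Let F be a field of characteristic 0 and c, d, e, f ∈ F. The system f = 0, c(d+e) = 0, d(d+e) = 0, c²(c+1) = 0, d·c(c+1) = 0, d²·c = 0, d²(d−1) = 0, e²(e+1) = 0 holds if and only if (c,d,e,f) is one of (−1,0,0,0), (0,0,−1,0), (0,0,0,0), (0,1,−1,0). -/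
/-- The Gröbner basis system of Case 2 (a=0, b=1) vanishes iff (c,d,e,f) is one of
(−1,0,0,0), (0,0,−1,0), (0,0,0,0), (0,1,−1,0). -/
theorem case2_zero_set {F : Type*} [Field F] [CharZero F] (c d e f : F) :
    (f = 0 ∧ c * (d + e) = 0 ∧ d * (d + e) = 0 ∧ c ^ 2 * (c + 1) = 0 ∧
        d * c * (c + 1) = 0 ∧ d ^ 2 * c = 0 ∧ d ^ 2 * (d - 1) = 0 ∧
        e ^ 2 * (e + 1) = 0) ↔
      ((c, d, e, f) = (-1, 0, 0, 0) ∨ (c, d, e, f) = (0, 0, -1, 0) ∨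
        (c, d, e, f) = (0, 0, 0, 0) ∨ (c, d, e, f) = (0, 1, -1, 0)) := by
  constructor
  · rintro ⟨hf, h1, h2, h3, h4, h5, h6, h7⟩
    subst hf
    have hc : c = 0 ∨ c = -1 := by
      rcases mul_eq_zero.1 h3 with h | h
      · exact Or.inl (pow_eq_zero_iff two_ne_zero |>.1 h)
      · exact Or.inr (by linear_combination h)
    have hd : d = 0 ∨ d = 1 := by
      rcases mul_eq_zero.1 h6 with h | h
      · exact Or.inl (pow_eq_zero_iff two_ne_zero |>.1 h)
      · exact Or.inr (by linear_combination h)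
    have he : e = 0 ∨ e = -1 := by
      rcases mul_eq_zero.1 h7 with h | h
      · exact Or.inl (pow_eq_zero_iff two_ne_zero |>.1 h)
      · exact Or.inr (by linear_combination h)
    rcases hc with hc | hc
    · subst hc
      rcases hd with hd | hd
      · subst hd
        rcases he with he | he <;> subst he <;> simp
      · subst hd
        have : e = -1 := by linear_combination h2
        subst this; simp
    · subst hc
      have hd0 : d = 0 := by
        rcases hd with hd | hd
        · exact hd
        · exfalso; subst hd; simp at h5
      subst hd0
      have : e = 0 := by linear_combination -h1
      subst this; simp
  · rintro (h | h | h | h) <;> simp only [Prod.mk.injEq] at h <;>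
      obtain ⟨hc, hd, he, hf⟩ := h <;> subst hc <;> subst hd <;> subst he <;> subst hf <;>
      norm_num
end
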